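/- arXiv:2512.03718 — 6 statements merged into one kernel-verified Lean document; each statement's English description precedes it below -/
import Mathlib

section
/- Suppose there exists an m×n matrix M' over Σ that is fair w.r.t. γ with d(M,M') ≤ k and dr(M') ≤ r. Then there exists an m×n matrix M* over Σ that is fair w.r.t. γ with d(M,M*) ≤ k and dr(M*) ≤ r, and whose entries are column-wise majority values of its clusters: for every row index t ∈ [m], every column j ∈ [n], and every value v ∈ Σ, #{i ∈ [m] : M*[i,⋆] = M*[t,⋆] and M[i,j] = v} ≤ #{i ∈ [m] : M*[i,⋆] = M*[t,⋆] and M[i,j] = M*[t,j]}. -/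
variable {m n c : ℕ} {A : Type*} [Fintype A] [DecidableEq A]

/-- The set of distinct row types of a matrix. -/
def types (M : Fin m → Fin n → A) : Finset (Fin n → A) :=
  Finset.univ.image (fun i => M i)

/-- The number of distinct rows of a matrix. -/
def dr (M : Fin m → Fin n → A) : ℕ := (types M).card

/-- The cluster of a type `τ` in `M`: the set of rows whose type is `τ`. -/
def cluster (M : Fin m → Fin n → A) (τ : Fin n → A) : Finset (Fin m) :=
  Finset.univ.filter (fun i => M i = τ)

/-- The edit cost between two matrices: the number of positions where they differ. -/
def editCost (M M' : Fin m → Fin n → A) : ℕ :=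
  ((Finset.univ : Finset (Fin m × Fin n)).filter (fun p => M p.1 p.2 ≠ M' p.1 p.2)).card

/-- The number of occurrences of color `z` in the coloring `γ`. -/
def colorCount (γ : Fin m → Fin c) (z : Fin c) : ℕ :=
  (Finset.univ.filter (fun i => γ i = z)).card

/-- A set of rows is fair w.r.t. `γ` if it witnesses the same color distribution as `γ`. -/
def fairSet (γ : Fin m → Fin c) (S : Finset (Fin m)) : Prop :=
  ∀ z : Fin c, m * (S.filter (fun i => γ i = z)).card = colorCount γ z * S.card

/-- A matrix is fair if the cluster of each of its types is fair. -/
def fairMatrix (γ : Fin m → Fin c) (M' : Fin m → Fin n → A) : Prop :=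
  ∀ τ ∈ types M', fairSet γ (cluster M' τ)

/-- The fairlet size `c̃ = m / gcd(|γ|_1, …, |γ|_c)`. -/
def fairletSize (γ : Fin m → Fin c) : ℕ :=
  m / Finset.univ.gcd (colorCount γ)

open Finset in
lemma fairSet_union' {γ : Fin m → Fin c} {S T : Finset (Fin m)} (hS : fairSet γ S)
    (hT : fairSet γ T) (hd : Disjoint S T) : fairSet γ (S ∪ T) := by
  intro z
  rw [filter_union,
    card_union_of_disjoint (hd.mono (filter_subset _ _) (filter_subset _ _)),
    card_union_of_disjoint hd, Nat.mul_add, Nat.mul_add, hS z, hT z]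

open Finset in
lemma cluster_empty_of_notMem' {M : Fin m → Fin n → A} {τ : Fin n → A}
    (h : τ ∉ types M) : cluster M τ = ∅ := by
  simp only [types, mem_image, mem_univ, true_and, not_exists] at h
  ext i
  simp only [cluster, mem_filter, mem_univ, true_and, notMem_empty, iff_false]
  exact h i

/-- Every solvable fair-clustering instance admits a solution whose
entries are column-wise majority values of its clusters. -/
theorem majority_solution (hm : 0 < m) (hn : 0 < n) (γ : Fin m → Fin c)
    (hγ : Function.Surjective γ) (M : Fin m → Fin n → A) (k r : ℕ)
    (h : ∃ M' : Fin m → Fin n → A, fairMatrix γ M' ∧ editCost M M' ≤ k ∧ dr M' ≤ r) :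
    ∃ Mstar : Fin m → Fin n → A, fairMatrix γ Mstar ∧ editCost M Mstar ≤ k ∧ dr Mstar ≤ r ∧
      ∀ (t : Fin m) (j : Fin n) (v : A),
        ((cluster Mstar (Mstar t)).filter (fun i => M i j = v)).card ≤
          ((cluster Mstar (Mstar t)).filter (fun i => M i j = Mstar t j)).card := by
  classical
  open Finset in
  obtain ⟨M0, hM0⟩ := h
  have hne : (Finset.univ.filter
      (fun N : Fin m → Fin n → A => fairMatrix γ N ∧ editCost M N ≤ k ∧ dr N ≤ r)).Nonempty :=
    ⟨M0, by simpa using hM0⟩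
  obtain ⟨Mstar, hmem, hmin⟩ := Finset.exists_min_image _ (fun N => editCost M N) hne
  simp only [mem_filter, mem_univ, true_and] at hmem
  obtain ⟨hfair, hcost, hdr⟩ := hmem
  refine ⟨Mstar, hfair, hcost, hdr, ?_⟩
  by_contra hcon
  push_neg at hcon
  obtain ⟨t, j, v, htjv⟩ := hcon
  set τ : Fin n → A := Mstar t with hτ
  set C : Finset (Fin m) := cluster Mstar τ with hC
  -- v differs from τ j
  have hvw : v ≠ τ j := by
    intro hv
    rw [hv] at htjv
    exact lt_irrefl _ htjv
  set σ : Fin n → A := Function.update τ j v with hσ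
  have hστ : σ ≠ τ := by
    intro hh
    apply hvw
    have := congrFun hh j
    simpa [hσ, Function.update_self] using this
  set N : Fin m → Fin n → A := fun i => if Mstar i = τ then σ else Mstar i with hN
  have hmemC : ∀ i, i ∈ C ↔ Mstar i = τ := by
    intro i; simp [hC, cluster]
  have hτmem : τ ∈ types Mstar := Finset.mem_image.2 ⟨t, Finset.mem_univ _, rfl⟩
  -- types N ⊆ insert σ ((types Mstar).erase τ)
  have htypes : types N ⊆ insert σ ((types Mstar).erase τ) := by
    intro ρ hρ
    obtain ⟨i, -, hi⟩ := Finset.mem_image.1 hρ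
    by_cases hiτ : Mstar i = τ
    · have : ρ = σ := by rw [← hi]; simp [hN, hiτ]
      exact this ▸ Finset.mem_insert_self _ _
    · have hρi : ρ = Mstar i := by rw [← hi]; simp [hN, hiτ]
      refine Finset.mem_insert_of_mem (Finset.mem_erase.2 ⟨?_, ?_⟩)
      · rw [hρi]; exact fun hh => hiτ hh
      · rw [hρi]; exact Finset.mem_image.2 ⟨i, Finset.mem_univ _, rfl⟩
  have hdrN : dr N ≤ dr Mstar := by
    calc dr N ≤ (insert σ ((types Mstar).erase τ)).card := Finset.card_le_card htypes
    _ ≤ ((types Mstar).erase τ).card + 1 := Finset.card_insert_le _ _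
    _ = ((types Mstar).card - 1) + 1 := by rw [Finset.card_erase_of_mem hτmem]
    _ ≤ (types Mstar).card := by
        have : 0 < (types Mstar).card := Finset.card_pos.2 ⟨τ, hτmem⟩
        omega
  -- clusters of N
  have hclσ : cluster N σ = cluster Mstar σ ∪ C := by
    ext i
    simp only [cluster, Finset.mem_filter, Finset.mem_union, Finset.mem_univ, true_and, hC]
    by_cases hiτ : Mstar i = τ <;> simp [hN, hiτ, hστ]
  have hclρ : ∀ ρ, ρ ≠ σ → ρ ≠ τ → cluster N ρ = cluster Mstar ρ := by
    intro ρ h1 h2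
    ext i
    simp only [cluster, Finset.mem_filter, Finset.mem_univ, true_and]
    by_cases hiτ : Mstar i = τ
    · have hl : N i = σ := by simp [hN, hiτ]
      rw [hl, hiτ]
      constructor
      · intro hh; exact absurd hh.symm h1
      · intro hh; exact absurd hh.symm h2
    · simp [hN, hiτ]
  -- fairness of N
  have hfairC : fairSet γ C := hfair τ hτmem
  have hfairN : fairMatrix γ N := by
    intro ρ hρ
    obtain ⟨i, -, hi⟩ := Finset.mem_image.1 hρ
    by_cases hρσ : ρ = σ
    · subst hρσ
      rw [hclσ]
      have hdisj : Disjoint (cluster Mstar σ) C := by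
        rw [Finset.disjoint_left]
        intro a ha haC
        have h1 : Mstar a = σ := by simpa [cluster] using ha
        have h2 : Mstar a = τ := (hmemC a).1 haC
        exact hστ (h1 ▸ h2 ▸ rfl)
      refine fairSet_union' ?_ hfairC hdisj
      by_cases hσmem : σ ∈ types Mstar
      · exact hfair σ hσmem
      · rw [cluster_empty_of_notMem' hσmem]
        intro z; simp
    · have hρτ : ρ ≠ τ := by
        intro hh
        by_cases hiτ : Mstar i = τ
        · apply hρσ; rw [← hi]; simp [hN, hiτ]
        · apply hiτ; rw [← hh, ← hi]; simp [hN, hiτ]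
      rw [hclρ ρ hρσ hρτ]
      apply hfair
      have hiτ : Mstar i ≠ τ := by
        intro hiτ; apply hρσ; rw [← hi]; simp [hN, hiτ]
      have : ρ = Mstar i := by rw [← hi]; simp [hN, hiτ]
      exact this ▸ Finset.mem_image.2 ⟨i, Finset.mem_univ _, rfl⟩
  -- edit cost comparison
  have key : ∀ X : Fin m → Fin n → A, editCost M X =
      ((Finset.univ : Finset (Fin m × Fin n)).filter
        (fun p => M p.1 p.2 ≠ X p.1 p.2 ∧ (p.1 ∈ C ∧ p.2 = j))).card +
      ((Finset.univ : Finset (Fin m × Fin n)).filter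
        (fun p => M p.1 p.2 ≠ X p.1 p.2 ∧ ¬(p.1 ∈ C ∧ p.2 = j))).card := by
    intro X
    rw [editCost,
      ← Finset.card_filter_add_card_filter_not
        (p := fun p : Fin m × Fin n => p.1 ∈ C ∧ p.2 = j),
      Finset.filter_filter, Finset.filter_filter]
  have hsecond :
      ((Finset.univ : Finset (Fin m × Fin n)).filter
        (fun p => M p.1 p.2 ≠ N p.1 p.2 ∧ ¬(p.1 ∈ C ∧ p.2 = j))) =
      ((Finset.univ : Finset (Fin m × Fin n)).filter
        (fun p => M p.1 p.2 ≠ Mstar p.1 p.2 ∧ ¬(p.1 ∈ C ∧ p.2 = j))) := by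
    apply Finset.filter_congr
    intro p _
    by_cases hq : p.1 ∈ C ∧ p.2 = j
    · simp [hq]
    · have heq : N p.1 p.2 = Mstar p.1 p.2 := by
        by_cases h1 : p.1 ∈ C
        · have h2 : p.2 ≠ j := fun hh => hq ⟨h1, hh⟩
          have h3 : Mstar p.1 = τ := (hmemC p.1).1 h1
          simp [hN, h3, hσ, Function.update_of_ne h2]
        · have h3 : Mstar p.1 ≠ τ := fun hh => h1 ((hmemC p.1).2 hh)
          simp [hN, h3]
      rw [heq]
  have hfirst : ∀ X : Fin m → Fin n → A,
      ((Finset.univ : Finset (Fin m × Fin n)).filter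
        (fun p => M p.1 p.2 ≠ X p.1 p.2 ∧ (p.1 ∈ C ∧ p.2 = j))) =
      (C.filter (fun i => M i j ≠ X i j)).image (fun i => (i, j)) := by
    intro X
    ext ⟨a, b⟩
    simp only [Finset.mem_filter, Finset.mem_univ, true_and, Finset.mem_image,
      Prod.mk.injEq]
    constructor
    · rintro ⟨hne', haC, hbj⟩
      subst hbj
      exact ⟨a, ⟨haC, hne'⟩, rfl, rfl⟩
    · rintro ⟨i, ⟨hiC, hine⟩, rfl, rfl⟩
      exact ⟨hine, hiC, rfl⟩
  have hinj : Function.Injective (fun i : Fin m => (i, j)) := by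
    intro a b hab
    exact congrArg Prod.fst hab
  -- compute the two "first" cardinalities
  have hNval : ∀ i ∈ C, N i j = v := by
    intro i hi
    have h3 : Mstar i = τ := (hmemC i).1 hi
    simp [hN, h3, hσ, Function.update_self]
  have hMstarval : ∀ i ∈ C, Mstar i j = τ j := by
    intro i hi; rw [(hmemC i).1 hi]
  have hfN : (C.filter (fun i => M i j ≠ N i j)) = C.filter (fun i => M i j ≠ v) := by
    apply Finset.filter_congr
    intro i hi; rw [hNval i hi]
  have hfM : (C.filter (fun i => M i j ≠ Mstar i j)) = C.filter (fun i => M i j ≠ τ j) := by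
    apply Finset.filter_congr
    intro i hi; rw [hMstarval i hi]
  have hsplit1 : (C.filter (fun i => M i j = v)).card
      + (C.filter (fun i => ¬(M i j = v))).card = C.card :=
    Finset.card_filter_add_card_filter_not _
  have hsplit2 : (C.filter (fun i => M i j = τ j)).card
      + (C.filter (fun i => ¬(M i j = τ j))).card = C.card :=
    Finset.card_filter_add_card_filter_not _
  have htjv' : (C.filter (fun i => M i j = τ j)).card < (C.filter (fun i => M i j = v)).card := htjv
  have hstrict : editCost M N < editCost M Mstar := by
    rw [key N, key Mstar, hsecond, hfirst N, hfirst Mstar,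
      Finset.card_image_of_injective _ hinj, Finset.card_image_of_injective _ hinj,
      hfN, hfM]
    have h1 : (C.filter (fun i => M i j ≠ v)).card < (C.filter (fun i => M i j ≠ τ j)).card := by
      simp only [ne_eq]
      omega
    omega
  have hNmem : N ∈ Finset.univ.filter
      (fun N : Fin m → Fin n → A => fairMatrix γ N ∧ editCost M N ≤ k ∧ dr N ≤ r) := by
    simp only [Finset.mem_filter, Finset.mem_univ, true_and]
    exact ⟨hfairN, le_trans (le_of_lt hstrict) hcost, le_trans hdrN hdr⟩
  have := hmin N hNmem
  omega
end

section
/- Suppose there exists an m×n matrix M' over Σ that is fair w.r.t. γ with d(M,M') ≤ k and dr(M') ≤ r. Then there exists an m×n matrix M* over Σ that is fair w.r.t. γ with d(M,M*) ≤ k and dr(M*) ≤ r such that every M-fair type sends nothing or receives nothing: for every M-fair type τ, either every row i with M[i,⋆] = τ satisfies M*[i,⋆] = τ, or every row i with M*[i,⋆] = τ satisfies M[i,⋆] = τ. -/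
set_option maxHeartbeats 1000000


variable {m n c : ℕ} {A : Type*} [Fintype A] [DecidableEq A]

set_option linter.unusedVariables false in
lemma card_filter_comp (e : Fin m ≃ Fin m) (p : Fin m → Prop) [DecidablePred p] :
    (Finset.univ.filter (fun x => p (e x))).card = (Finset.univ.filter p).card := by
  rw [show Finset.univ.filter (fun x => p (e x))
      = (Finset.univ.filter p).map e.symm.toEmbedding by
    ext x
    simp [Finset.mem_map, Equiv.symm_apply_eq]]
  exact Finset.card_map _

lemma editCost_eq_sum (M M' : Fin m → Fin n → A) :
    editCost M M' = ∑ i, hammingDist (M i) (M' i) := by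
  unfold editCost hammingDist
  rw [Finset.card_filter, Fintype.sum_prod_type]
  simp [Finset.card_filter]

lemma image_univ_equiv (e : Fin m ≃ Fin m) (f : Fin m → (Fin n → A)) :
    Finset.univ.image (fun l => f (e l)) = Finset.univ.image f := by
  ext ρ
  simp only [Finset.mem_image, Finset.mem_univ, true_and]
  exact ⟨fun ⟨l, h⟩ => ⟨e l, h⟩, fun ⟨l, h⟩ => ⟨e.symm l, by simpa using h⟩⟩

lemma half (hm : 0 < m) (γ : Fin m → Fin c) (S S' : Finset (Fin m))
    (hS : fairSet γ S) (hS' : fairSet γ S') (hle : S.card ≤ S'.card)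
    (i : Fin m) (hi : i ∈ S \ S') : ∃ j ∈ S' \ S, γ j = γ i := by
  set z := γ i with hz
  have hcard : (S.filter (fun l => γ l = z)).card ≤ (S'.filter (fun l => γ l = z)).card := by
    have := (hS z).trans_le (Nat.mul_le_mul_left _ hle)
    rw [← hS' z] at this
    exact Nat.le_of_mul_le_mul_left this hm
  by_contra hcon
  push_neg at hcon
  have hsub : S'.filter (fun l => γ l = z) ⊆ S.filter (fun l => γ l = z) := by
    intro j hj
    rw [Finset.mem_filter] at hj ⊢
    refine ⟨?_, hj.2⟩
    by_contra hjS
    exact hcon j (Finset.mem_sdiff.mpr ⟨hj.1, hjS⟩) hj.2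
  have heq := Finset.eq_of_subset_of_card_le hsub hcard
  rw [Finset.mem_sdiff] at hi
  have : i ∈ S'.filter (fun l => γ l = z) := by
    rw [heq, Finset.mem_filter]; exact ⟨hi.1, rfl⟩
  exact hi.2 (Finset.mem_filter.mp this).1

lemma exists_same_color (hm : 0 < m) (γ : Fin m → Fin c) (S S' : Finset (Fin m))
    (hS : fairSet γ S) (hS' : fairSet γ S')
    (h1 : (S \ S').Nonempty) (h2 : (S' \ S).Nonempty) :
    ∃ i ∈ S \ S', ∃ j ∈ S' \ S, γ i = γ j := by
  rcases le_or_gt S.card S'.card with hle | hlt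
  · obtain ⟨i, hi⟩ := h1
    obtain ⟨j, hj, hγ⟩ := half hm γ S S' hS hS' hle i hi
    exact ⟨i, hi, j, hj, hγ.symm⟩
  · obtain ⟨j, hj⟩ := h2
    obtain ⟨i, hi, hγ⟩ := half hm γ S' S hS' hS hlt.le j hj
    exact ⟨i, hi, j, hj, hγ⟩


/-- Every solvable instance admits a solution in which every
M-fair type has no out-edges or no in-edges in the edit graph. -/
theorem fair_send_or_receive (hm : 0 < m) (hn : 0 < n) (γ : Fin m → Fin c)
    (hγ : Function.Surjective γ) (M : Fin m → Fin n → A) (k r : ℕ)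
    (h : ∃ M' : Fin m → Fin n → A, fairMatrix γ M' ∧ editCost M M' ≤ k ∧ dr M' ≤ r) :
    ∃ Mstar : Fin m → Fin n → A, fairMatrix γ Mstar ∧ editCost M Mstar ≤ k ∧ dr Mstar ≤ r ∧
      ∀ τ : Fin n → A, fairSet γ (cluster M τ) →
        ((∀ i, M i = τ → Mstar i = τ) ∨ (∀ i, Mstar i = τ → M i = τ)) := by
  classical
  obtain ⟨M', hfair, hcost, hdr⟩ := h
  suffices H : ∀ N (M' : Fin m → Fin n → A),
      (Finset.univ.filter (fun l => M' l ≠ M l)).card ≤ N →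
      fairMatrix γ M' → editCost M M' ≤ k → dr M' ≤ r →
      ∃ Mstar : Fin m → Fin n → A, fairMatrix γ Mstar ∧ editCost M Mstar ≤ k ∧ dr Mstar ≤ r ∧
        ∀ τ : Fin n → A, fairSet γ (cluster M τ) →
          ((∀ i, M i = τ → Mstar i = τ) ∨ (∀ i, Mstar i = τ → M i = τ)) by
    exact H _ M' le_rfl hfair hcost hdr
  intro N
  induction N with
  | zero =>
    intro M' hφ hf hc hd
    have hMM : M' = M := by
      funext l
      by_contra hne
      have : l ∈ Finset.univ.filter (fun l => M' l ≠ M l) := by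
        simp [hne]
      have := Finset.card_pos.mpr ⟨l, this⟩
      omega
    subst hMM
    exact ⟨M', hf, hc, hd, fun τ _ => Or.inl (fun i hi => hi)⟩
  | succ N ih =>
    intro M' hφ hf hc hd
    by_cases hgood : ∀ τ : Fin n → A, fairSet γ (cluster M τ) →
        ((∀ i, M i = τ → M' i = τ) ∨ (∀ i, M' i = τ → M i = τ))
    · exact ⟨M', hf, hc, hd, hgood⟩
    push_neg at hgood
    obtain ⟨τ, hτfair, hbad1, hbad2⟩ := hgood
    obtain ⟨i0, hi0M, hi0⟩ := hbad1
    obtain ⟨j0, hj0, hj0M⟩ := hbad2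
    -- τ ∈ types M'
    have hτtypes : τ ∈ types M' := Finset.mem_image.mpr ⟨j0, Finset.mem_univ _, hj0⟩
    have hS'fair : fairSet γ (cluster M' τ) := hf τ hτtypes
    -- nonempty differences
    have h1 : (cluster M τ \ cluster M' τ).Nonempty :=
      ⟨i0, Finset.mem_sdiff.mpr ⟨by simp [cluster, hi0M], by simp [cluster, hi0]⟩⟩
    have h2 : (cluster M' τ \ cluster M τ).Nonempty :=
      ⟨j0, Finset.mem_sdiff.mpr ⟨by simp [cluster, hj0], by simp [cluster, hj0M]⟩⟩
    obtain ⟨i, hi, j, hj, hγij⟩ :=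
      exists_same_color hm γ (cluster M τ) (cluster M' τ) hτfair hS'fair h1 h2
    rw [Finset.mem_sdiff] at hi hj
    have hiM : M i = τ := by simpa [cluster] using hi.1
    have hiM' : M' i ≠ τ := by simpa [cluster] using hi.2
    have hjM' : M' j = τ := by simpa [cluster] using hj.1
    have hjM : M j ≠ τ := by simpa [cluster] using hj.2
    have hij : i ≠ j := fun hh => hiM' (hh ▸ hjM')
    set e := Equiv.swap i j with he
    set M'' : Fin m → Fin n → A := fun l => M' (e l) with hM''
    have hei : e i = j := Equiv.swap_apply_left i j
    have hej : e j = i := Equiv.swap_apply_right i j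
    have heo : ∀ l, l ≠ i → l ≠ j → e l = l := fun l h1 h2 =>
      Equiv.swap_apply_of_ne_of_ne h1 h2
    have hγe : ∀ l, γ (e l) = γ l := by
      intro l
      rcases eq_or_ne l i with rfl | hli
      · rw [hei, hγij]
      rcases eq_or_ne l j with rfl | hlj
      · rw [hej, hγij]
      · rw [heo l hli hlj]
    -- types equal
    have htypes : types M'' = types M' := image_univ_equiv e M'
    -- fairness
    have hf'' : fairMatrix γ M'' := by
      intro ρ hρ z
      have hcl : ∀ (q : Fin m → Prop) [DecidablePred q],
          ((cluster M'' ρ).filter q).card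
            = ((Finset.univ.filter (fun l => M'' l = ρ ∧ q l)).card) := by
        intro q _
        rw [cluster, Finset.filter_filter]
      have key : ((cluster M'' ρ).filter (fun l => γ l = z)).card
          = ((cluster M' ρ).filter (fun l => γ l = z)).card := by
        rw [cluster, cluster, Finset.filter_filter, Finset.filter_filter]
        have : (Finset.univ.filter (fun l => M'' l = ρ ∧ γ l = z))
            = (Finset.univ.filter (fun l => (fun x => M' x = ρ ∧ γ x = z) (e l))) := by
          apply Finset.filter_congr
          intro l _
          simp only [hM'', hγe l]
        rw [this]
        exact card_filter_comp e (fun x => M' x = ρ ∧ γ x = z)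
      have key2 : (cluster M'' ρ).card = (cluster M' ρ).card := by
        rw [cluster, cluster]
        exact card_filter_comp e (fun l => M' l = ρ)
      rw [key, key2]
      exact hf ρ (htypes ▸ hρ) z
    -- cost
    have hc'' : editCost M M'' ≤ editCost M M' := by
      rw [editCost_eq_sum, editCost_eq_sum]
      have split : ∀ f : Fin m → ℕ,
          ∑ l, f l = f i + (f j + ∑ l ∈ (Finset.univ.erase i).erase j, f l) := by
        intro f
        rw [← Finset.add_sum_erase _ f (Finset.mem_univ i),
            ← Finset.add_sum_erase _ f (Finset.mem_erase.mpr ⟨hij.symm, Finset.mem_univ j⟩)]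
      rw [split (fun l => hammingDist (M l) (M'' l)),
          split (fun l => hammingDist (M l) (M' l))]
      have hrest : ∑ l ∈ (Finset.univ.erase i).erase j, hammingDist (M l) (M'' l)
          = ∑ l ∈ (Finset.univ.erase i).erase j, hammingDist (M l) (M' l) := by
        apply Finset.sum_congr rfl
        intro l hl
        rw [Finset.mem_erase, Finset.mem_erase] at hl
        simp only [hM'', heo l hl.2.1 hl.1]
      rw [hrest]
      have h1 : hammingDist (M i) (M'' i) = 0 := by
        simp only [hM'', hei, hjM', hiM, hammingDist_self]
      have h2 : hammingDist (M j) (M'' j) ≤ hammingDist (M j) (M' j) + hammingDist (M i) (M' i) := by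
        simp only [hM'', hej]
        calc hammingDist (M j) (M' i)
            ≤ hammingDist (M j) τ + hammingDist τ (M' i) := hammingDist_triangle _ _ _
          _ = hammingDist (M j) (M' j) + hammingDist (M i) (M' i) := by rw [hjM', hiM]
      omega
    -- dr
    have hd'' : dr M'' ≤ r := by rw [dr, htypes]; exact hd
    -- measure decreases
    have hφ'' : (Finset.univ.filter (fun l => M'' l ≠ M l)).card ≤ N := by
      have hsub : Finset.univ.filter (fun l => M'' l ≠ M l)
          ⊆ (Finset.univ.filter (fun l => M' l ≠ M l)).erase i := by
        intro l hl
        rw [Finset.mem_filter] at hl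
        rw [Finset.mem_erase, Finset.mem_filter]
        rcases eq_or_ne l i with rfl | hli
        · exfalso
          apply hl.2
          simp only [hM'', hei, hjM', hiM]
        rcases eq_or_ne l j with rfl | hlj
        · exact ⟨hli, Finset.mem_univ _, fun hh => hjM (hjM' ▸ hh ▸ rfl)⟩
        · refine ⟨hli, Finset.mem_univ _, ?_⟩
          have h3 : M' (e l) ≠ M l := hl.2
          rwa [heo l hli hlj] at h3
      have hmem : i ∈ Finset.univ.filter (fun l => M' l ≠ M l) := by
        simp only [Finset.mem_filter, Finset.mem_univ, true_and]
        rw [hiM]; exact hiM'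
      calc (Finset.univ.filter (fun l => M'' l ≠ M l)).card
          ≤ ((Finset.univ.filter (fun l => M' l ≠ M l)).erase i).card :=
            Finset.card_le_card hsub
        _ = (Finset.univ.filter (fun l => M' l ≠ M l)).card - 1 :=
            Finset.card_erase_of_mem hmem
        _ ≤ N := by
            have := Finset.card_pos.mpr ⟨i, hmem⟩
            omega
    exact ih M'' hφ'' hf'' (hc''.trans hc) hd''
end

section
/- Every fair set S ⊆ [m] w.r.t. γ can be partitioned into |S|/c̃ pairwise disjoint fair subsets, each of size exactly c̃ (i.e., every fair set admits a partition into fairlets). -/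
variable {m c : ℕ}

lemma sum_colorCount (γ : Fin m → Fin c) : ∑ z, colorCount γ z = m := by
  have := Finset.card_eq_sum_card_fiberwise (f := γ) (s := Finset.univ) (t := Finset.univ)
    (fun x _ => Finset.mem_univ _)
  simpa [colorCount] using this.symm

lemma gcd_dvd_m (γ : Fin m → Fin c) : Finset.univ.gcd (colorCount γ) ∣ m := by
  have h : Finset.univ.gcd (colorCount γ) ∣ ∑ z, colorCount γ z :=
    Finset.dvd_sum fun z _ => Finset.gcd_dvd (Finset.mem_univ z)
  rwa [sum_colorCount γ] at h

lemma gcd_pos (hm : 0 < m) (γ : Fin m → Fin c) (hγ : Function.Surjective γ) :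
    0 < Finset.univ.gcd (colorCount γ) := by
  rcases Nat.eq_zero_or_pos (Finset.univ.gcd (colorCount γ)) with h | h
  · exfalso
    have hc : 0 < c := Fin.pos (γ ⟨0, hm⟩)
    have z : Fin c := ⟨0, hc⟩
    have hz := (Finset.gcd_eq_zero_iff.mp h) z (Finset.mem_univ z)
    obtain ⟨i, hi⟩ := hγ z
    have : i ∈ Finset.univ.filter (fun i => γ i = z) := by simp [hi]
    simp only [colorCount, Finset.card_eq_zero] at hz
    rw [hz] at this
    exact absurd this (Finset.notMem_empty i)
  · exact h

lemma fairletSize_pos (hm : 0 < m) (γ : Fin m → Fin c) (hγ : Function.Surjective γ) :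
    0 < fairletSize γ :=
  Nat.div_pos (Nat.le_of_dvd hm (gcd_dvd_m γ)) (gcd_pos hm γ hγ)

lemma fair_card_dvd (hm : 0 < m) (γ : Fin m → Fin c) (hγ : Function.Surjective γ)
    (S : Finset (Fin m)) (hS : fairSet γ S) : fairletSize γ ∣ S.card := by
  set g := Finset.univ.gcd (colorCount γ) with hg
  have hgm : g ∣ m := gcd_dvd_m γ
  have hgpos : 0 < g := gcd_pos hm γ hγ
  have h1 : Finset.univ.gcd (fun z => m * (S.filter (fun i => γ i = z)).card)
      = Finset.univ.gcd (fun z => colorCount γ z * S.card) := by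
    congr 1
    funext z
    exact hS z
  rw [Finset.gcd_mul_left, Finset.gcd_mul_right] at h1
  simp only [normalize_eq] at h1
  -- h1 : m * gcd (fun z => n z) = g * S.card
  have hm' : m = fairletSize γ * g := by
    rw [fairletSize, ← hg, Nat.div_mul_cancel hgm]
  refine ⟨Finset.univ.gcd fun z => (S.filter (fun i => γ i = z)).card, ?_⟩
  have h2 : g * (fairletSize γ * Finset.univ.gcd fun z => (S.filter (fun i => γ i = z)).card)
      = g * S.card := by
    calc g * (fairletSize γ * Finset.univ.gcd fun z => (S.filter (fun i => γ i = z)).card)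
        = (fairletSize γ * g) * Finset.univ.gcd fun z => (S.filter (fun i => γ i = z)).card := by
          ring
      _ = m * Finset.univ.gcd fun z => (S.filter (fun i => γ i = z)).card := by rw [← hm']
      _ = g * S.card := h1
  exact (Nat.eq_of_mul_eq_mul_left hgpos h2).symm

lemma filter_sdiff' {α : Type*} [DecidableEq α] (s t : Finset α) (p : α → Prop)
    [DecidablePred p] : (s \ t).filter p = s.filter p \ t.filter p := by
  ext i
  simp only [Finset.mem_filter, Finset.mem_sdiff]
  tauto

lemma exists_fairlet (hm : 0 < m) (γ : Fin m → Fin c) (hγ : Function.Surjective γ)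
    (S : Finset (Fin m)) (hS : fairSet γ S) (hne : S.Nonempty) :
    ∃ T ⊆ S, fairSet γ T ∧ T.card = fairletSize γ ∧ fairSet γ (S \ T) := by
  set g := Finset.univ.gcd (colorCount γ) with hg
  have hgm : g ∣ m := gcd_dvd_m γ
  have hgpos : 0 < g := gcd_pos hm γ hγ
  have hmgc : m = fairletSize γ * g := by rw [fairletSize, ← hg, Nat.div_mul_cancel hgm]
  have hacc : ∀ z : Fin c, colorCount γ z / g * g = colorCount γ z := fun z =>
    Nat.div_mul_cancel (Finset.gcd_dvd (Finset.mem_univ z))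
  have hma : ∀ z : Fin c, m * (colorCount γ z / g) = colorCount γ z * fairletSize γ := by
    intro z
    calc m * (colorCount γ z / g) = fairletSize γ * g * (colorCount γ z / g) := by rw [← hmgc]
      _ = fairletSize γ * (colorCount γ z / g * g) := by ring
      _ = fairletSize γ * colorCount γ z := by rw [hacc z]
      _ = colorCount γ z * fairletSize γ := by ring
  obtain ⟨N, hN⟩ := fair_card_dvd hm γ hγ S hS
  have hN1 : 1 ≤ N := by
    rcases Nat.eq_zero_or_pos N with h | h
    · exfalso
      rw [h, Nat.mul_zero] at hN
      have := Finset.card_pos.mpr hne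
      omega
    · exact h
  have hle : ∀ z : Fin c, colorCount γ z / g ≤ (S.filter (fun i => γ i = z)).card := by
    intro z
    have h1 : m * (S.filter (fun i => γ i = z)).card = colorCount γ z * (fairletSize γ * N) := by
      rw [← hN]; exact hS z
    have key : m * (colorCount γ z / g) ≤ m * (S.filter (fun i => γ i = z)).card := by
      rw [hma z, h1]
      calc colorCount γ z * fairletSize γ = colorCount γ z * fairletSize γ * 1 := by ring
        _ ≤ colorCount γ z * fairletSize γ * N := Nat.mul_le_mul_left _ hN1
        _ = colorCount γ z * (fairletSize γ * N) := by ring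
    exact Nat.le_of_mul_le_mul_left key hm
  choose A hAsub hAcard using fun z => Finset.exists_subset_card_eq (hle z)
  set T := Finset.univ.biUnion A with hT
  have hTfz : ∀ z, T.filter (fun i => γ i = z) = A z := by
    intro z
    ext i
    simp only [hT, Finset.mem_filter, Finset.mem_biUnion, Finset.mem_univ, true_and]
    constructor
    · rintro ⟨⟨w, hw⟩, hz⟩
      have hcol : γ i = w := (Finset.mem_filter.mp (hAsub w hw)).2
      have : w = z := by rw [← hcol, hz]
      rwa [this] at hw
    · intro h
      exact ⟨⟨z, h⟩, (Finset.mem_filter.mp (hAsub z h)).2⟩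
  have hTS : T ⊆ S := by
    intro i hi
    obtain ⟨z, _, hz⟩ := Finset.mem_biUnion.mp hi
    exact (Finset.mem_filter.mp (hAsub z hz)).1
  have hdisj : ∀ x ∈ (Finset.univ : Finset (Fin c)), ∀ y ∈ Finset.univ, x ≠ y →
      Disjoint (A x) (A y) := by
    intro x _ y _ hxy
    rw [Finset.disjoint_left]
    intro i hix hiy
    have h1 : γ i = x := (Finset.mem_filter.mp (hAsub x hix)).2
    have h2 : γ i = y := (Finset.mem_filter.mp (hAsub y hiy)).2
    exact hxy (h1 ▸ h2)
  have hTcard : T.card = fairletSize γ := by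
    have h1 : T.card = ∑ z, (A z).card := Finset.card_biUnion hdisj
    have h2 : T.card = ∑ z, colorCount γ z / g := by
      rw [h1]; exact Finset.sum_congr rfl fun z _ => hAcard z
    have h3 : (∑ z, colorCount γ z / g) * g = m := by
      rw [Finset.sum_mul]
      rw [Finset.sum_congr rfl fun z _ => hacc z]
      exact sum_colorCount γ
    have h4 : T.card * g = fairletSize γ * g := by rw [h2, h3]; exact hmgc
    exact Nat.eq_of_mul_eq_mul_right hgpos h4
  have hTfair : fairSet γ T := by
    intro z
    rw [hTfz z, hAcard z, hTcard]
    exact hma z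
  have hSTfair : fairSet γ (S \ T) := by
    intro z
    have hfe : (S \ T).filter (fun i => γ i = z) = S.filter (fun i => γ i = z) \ A z := by
      rw [filter_sdiff', hTfz z]
    have hcle : fairletSize γ ≤ S.card := by
      calc fairletSize γ = T.card := hTcard.symm
        _ ≤ S.card := Finset.card_le_card hTS
    rw [hfe, Finset.card_sdiff_of_subset (hAsub z), Finset.card_sdiff_of_subset hTS, hTcard, hAcard z]
    calc m * ((S.filter (fun i => γ i = z)).card - colorCount γ z / g)
        = m * (S.filter (fun i => γ i = z)).card - m * (colorCount γ z / g) :=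
          Nat.mul_sub m _ _
      _ = colorCount γ z * S.card - colorCount γ z * fairletSize γ := by rw [hS z, hma z]
      _ = colorCount γ z * (S.card - fairletSize γ) := (Nat.mul_sub _ _ _).symm
  exact ⟨T, hTS, hTfair, hTcard, hSTfair⟩

/-- Every fair set can be partitioned into `|S|/c̃` fairlets. -/
theorem fair_set_partition_into_fairlets (hm : 0 < m) (γ : Fin m → Fin c)
    (hγ : Function.Surjective γ) (S : Finset (Fin m)) (hS : fairSet γ S) :
    ∃ P : Finset (Finset (Fin m)),
      (P : Set (Finset (Fin m))).PairwiseDisjoint id ∧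
      P.biUnion id = S ∧
      P.card = S.card / fairletSize γ ∧
      ∀ T ∈ P, fairSet γ T ∧ T.card = fairletSize γ := by
  have hcpos : 0 < fairletSize γ := fairletSize_pos hm γ hγ
  suffices h : ∀ n (S : Finset (Fin m)), S.card ≤ n → fairSet γ S →
      ∃ P : Finset (Finset (Fin m)),
        (P : Set (Finset (Fin m))).PairwiseDisjoint id ∧
        P.biUnion id = S ∧
        P.card = S.card / fairletSize γ ∧
        ∀ T ∈ P, fairSet γ T ∧ T.card = fairletSize γ from
    h S.card S le_rfl hS
  intro n
  induction n with
  | zero =>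
    intro S hcard _
    have : S = ∅ := Finset.card_eq_zero.mp (Nat.le_zero.mp hcard)
    subst this
    exact ⟨∅, by simp, by simp, by simp, by simp⟩
  | succ n ih =>
    intro S hcard hSfair
    rcases S.eq_empty_or_nonempty with rfl | hne
    · exact ⟨∅, by simp, by simp, by simp, by simp⟩
    · obtain ⟨T, hTS, hTfair, hTcard, hSTfair⟩ := exists_fairlet hm γ hγ S hSfair hne
      have hcle : fairletSize γ ≤ S.card := by
        calc fairletSize γ = T.card := hTcard.symm
          _ ≤ S.card := Finset.card_le_card hTS
      have hS'card : (S \ T).card = S.card - fairletSize γ := by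
        rw [Finset.card_sdiff_of_subset hTS, hTcard]
      have hS'le : (S \ T).card ≤ n := by omega
      obtain ⟨P', hP'disj, hP'bu, hP'card, hP'mem⟩ := ih (S \ T) hS'le hSTfair
      have hTne : T.Nonempty := Finset.card_pos.mp (hTcard ▸ hcpos)
      have hTnotin : T ∉ P' := by
        intro hmem
        have hsub : T ⊆ (S \ T) := hP'bu ▸ Finset.subset_biUnion_of_mem id hmem
        obtain ⟨i, hi⟩ := hTne
        exact (Finset.mem_sdiff.mp (hsub hi)).2 hi
      refine ⟨insert T P', ?_, ?_, ?_, ?_⟩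
      · rw [Finset.coe_insert]
        refine hP'disj.insert ?_
        intro U hU _
        have hUsub : U ⊆ S \ T := hP'bu ▸ Finset.subset_biUnion_of_mem id hU
        exact Finset.disjoint_sdiff.mono_right hUsub
      · rw [Finset.biUnion_insert, hP'bu]
        exact Finset.union_sdiff_of_subset hTS
      · rw [Finset.card_insert_of_notMem hTnotin, hP'card, hS'card]
        have h1 : S.card = (S.card - fairletSize γ) + fairletSize γ := by omega
        conv_rhs => rw [h1]
        rw [Nat.add_div_right _ hcpos]
      · intro U hU
        rcases Finset.mem_insert.mp hU with rfl | hU'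
        · exact ⟨hTfair, hTcard⟩
        · exact hP'mem U hU'
end

section
/- If an m×n matrix M' over Σ is fair w.r.t. γ, then c̃ · dr(M') ≤ c̃ · dr(M) + d(M,M'); equivalently, the number of distinct rows of M' is at most the number of distinct rows of M plus ⌊d(M,M')/c̃⌋. -/
variable {m n c : ℕ} {A : Type*} [Fintype A] [DecidableEq A]

/-!
Every cluster of a fair matrix has at least `c̃` rows, since `m` divides
`gcd_z |γ|_z · |S| = gcd(|γ|) · |S|`. A type of `M'` that is not a type of `M` can only occur in
rows that were edited, and distinct types have disjoint clusters, so each such type accounts for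
at least `c̃` edited rows, hence for at least `c̃` edits.
-/

open Finset

theorem fairletSize_le_card_of_fairSet (γ : Fin m → Fin c) {S : Finset (Fin m)}
    (hS : fairSet γ S) (hne : S.Nonempty) : fairletSize γ ≤ #S := by
  have hdvd : m ∣ univ.gcd (colorCount γ) * #S := by
    rw [← normalize_eq #S, ← Finset.gcd_mul_right]
    exact Finset.dvd_gcd fun z _ => ⟨_, (hS z).symm⟩
  rcases Nat.eq_zero_or_pos (univ.gcd (colorCount γ)) with hg | hg
  · simp [fairletSize, hg]
  · exact Nat.div_le_of_le_mul (Nat.le_of_dvd (Nat.mul_pos hg hne.card_pos) hdvd)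

section RowTypes

variable {α : Type*} [DecidableEq α]

theorem mem_types (M : Fin m → Fin n → α) (i : Fin m) : M i ∈ types M :=
  mem_image_of_mem _ (mem_univ i)

theorem cluster_nonempty {M : Fin m → Fin n → α} {τ : Fin n → α} (hτ : τ ∈ types M) :
    (cluster M τ).Nonempty := by
  obtain ⟨i, -, rfl⟩ := mem_image.mp hτ
  exact ⟨i, by simp [cluster]⟩

theorem card_filter_ne_le_editCost (M M' : Fin m → Fin n → α) :
    #{i | M i ≠ M' i} ≤ editCost M M' := by
  calc #{i | M i ≠ M' i}
      = #(({p : Fin m × Fin n | M p.1 p.2 ≠ M' p.1 p.2} : Finset _).image Prod.fst) := by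
        congr 1; ext i; simp [Function.ne_iff]
    _ ≤ editCost M M' := card_image_le

theorem sum_card_cluster (M : Fin m → Fin n → α) (T : Finset (Fin n → α)) :
    ∑ τ ∈ T, #(cluster M τ) = #{i | M i ∈ T} :=
  sum_card_fiberwise_eq_card_filter _ _ _

theorem mul_dr_le_mul_dr_add_editCost (M M' : Fin m → Fin n → α) {k : ℕ}
    (hk : ∀ τ ∈ types M', k ≤ #(cluster M' τ)) :
    k * dr M' ≤ k * dr M + editCost M M' := by
  set B := types M' \ types M
  have hB : k * #B ≤ #{i | M i ≠ M' i} :=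
    calc k * #B = ∑ _τ ∈ B, k := by rw [sum_const, smul_eq_mul, mul_comm]
      _ ≤ ∑ τ ∈ B, #(cluster M' τ) := sum_le_sum fun τ hτ => hk τ (mem_sdiff.mp hτ).1
      _ = #{i | M' i ∈ B} := sum_card_cluster M' B
      _ ≤ #{i | M i ≠ M' i} := card_le_card fun i hi => by
          simp only [B, mem_filter, mem_univ, mem_sdiff, true_and] at hi ⊢
          exact fun hMM' => hi.2 (hMM' ▸ mem_types M i)
  calc k * dr M' ≤ k * (#B + dr M) := Nat.mul_le_mul_left k card_le_card_sdiff_add_card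
    _ = k * dr M + k * #B := by rw [mul_add, add_comm]
    _ ≤ k * dr M + editCost M M' :=
        Nat.add_le_add_left (hB.trans (card_filter_ne_le_editCost M M')) _

end RowTypes

theorem fairletSize_mul_dr_le_general
    (γ : Fin m → Fin c)
    (M M' : Fin m → Fin n → A) (h : fairMatrix γ M') :
    fairletSize γ * dr M' ≤ fairletSize γ * dr M + editCost M M' :=
  mul_dr_le_mul_dr_add_editCost M M' fun τ hτ =>
    fairletSize_le_card_of_fairSet γ (h τ hτ) (cluster_nonempty hτ)

/-- For a fair matrix `M'`, `c̃ · dr(M') ≤ c̃ · dr(M) + d(M,M')`. -/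
theorem fairletSize_mul_dr_le (hm : 0 < m) (hn : 0 < n)
    (γ : Fin m → Fin c) (hγ : Function.Surjective γ)
    (M M' : Fin m → Fin n → A) (h : fairMatrix γ M') :
    fairletSize γ * dr M' ≤ fairletSize γ * dr M + editCost M M' :=
  fairletSize_mul_dr_le_general γ M M' h
end

section
/- If there exists an m×n matrix M' over Σ that is fair w.r.t. γ with d(M,M') ≤ k, then the number of M-unfair types (types of M whose cluster in M is not a fair set) is at most 2k. -/
variable {m n c : ℕ} {A : Type*} [Fintype A] [DecidableEq A]

open Classical

/-!
A type is `M`-unfair only if its cluster in `M` differs from its cluster in the fair matrix `M'`.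
Such a disagreement on the cluster of `τ` is witnessed by a row on which `M` and `M'` differ and
which has type `τ` in `M` or in `M'`; so there are at most twice as many unfair types as differing
rows, and every differing row costs at least one edit.
-/

section
omit [Fintype A]

theorem card_filter_row_ne_le_editCost (M M' : Fin m → Fin n → A) :
    (Finset.univ.filter fun i => M i ≠ M' i).card ≤ editCost M M' := by
  refine Finset.card_le_card_of_surjOn Prod.fst fun i hi => ?_
  obtain ⟨j, hj⟩ := Function.ne_iff.mp (Finset.mem_filter.mp hi).2
  exact ⟨(i, j), by simp [hj], rfl⟩

theorem mem_cluster {M : Fin m → Fin n → A} {τ : Fin n → A} {i : Fin m} :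
    i ∈ cluster M τ ↔ M i = τ := by
  simp [cluster]

theorem mem_types_iff_cluster_nonempty {M : Fin m → Fin n → A} {τ : Fin n → A} :
    τ ∈ types M ↔ (cluster M τ).Nonempty := by
  simp [types, Finset.Nonempty, mem_cluster]

theorem exists_row_ne_of_cluster_ne {M M' : Fin m → Fin n → A} {τ : Fin n → A}
    (h : cluster M τ ≠ cluster M' τ) : ∃ i, M i ≠ M' i ∧ (M i = τ ∨ M' i = τ) := by
  obtain ⟨i, hi⟩ : ∃ i, ¬ (M i = τ ↔ M' i = τ) := by
    by_contra! hiff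
    exact h (Finset.ext fun i => by simpa only [mem_cluster] using hiff i)
  refine ⟨i, fun hMi => hi (by rw [hMi]), ?_⟩
  tauto

end

theorem card_filter_cluster_ne_le (M M' : Fin m → Fin n → A) :
    (Finset.univ.filter fun τ => cluster M τ ≠ cluster M' τ).card ≤
      2 * (Finset.univ.filter fun i => M i ≠ M' i).card := by
  set D := Finset.univ.filter fun i => M i ≠ M' i
  have hsub : (Finset.univ.filter fun τ => cluster M τ ≠ cluster M' τ) ⊆
      D.image M ∪ D.image M' := by
    intro τ hτ
    obtain ⟨i, hne, hτ | hτ⟩ := exists_row_ne_of_cluster_ne (Finset.mem_filter.mp hτ).2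
    · exact Finset.mem_union_left _ (Finset.mem_image.mpr ⟨i, by simpa [D] using hne, hτ⟩)
    · exact Finset.mem_union_right _ (Finset.mem_image.mpr ⟨i, by simpa [D] using hne, hτ⟩)
  calc _ ≤ (D.image M ∪ D.image M').card := Finset.card_le_card hsub
    _ ≤ (D.image M).card + (D.image M').card := Finset.card_union_le _ _
    _ ≤ 2 * D.card := by linarith [D.card_image_le (f := M), D.card_image_le (f := M')]

theorem filter_not_fairSet_subset_filter_cluster_ne {γ : Fin m → Fin c}
    {M M' : Fin m → Fin n → A} (hM' : fairMatrix γ M') :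
    (types M).filter (fun τ => ¬ fairSet γ (cluster M τ)) ⊆
      Finset.univ.filter fun τ => cluster M τ ≠ cluster M' τ := by
  intro τ hτ
  obtain ⟨hτM, hunfair⟩ := Finset.mem_filter.mp hτ
  refine Finset.mem_filter.mpr ⟨Finset.mem_univ τ, fun hcl => hunfair ?_⟩
  rw [hcl]
  exact hM' τ (mem_types_iff_cluster_nonempty.mpr (hcl ▸ mem_types_iff_cluster_nonempty.mp hτM))

theorem card_unfair_types_le_general
    (γ : Fin m → Fin c)
    (M : Fin m → Fin n → A) (k : ℕ)
    (h : ∃ M' : Fin m → Fin n → A, fairMatrix γ M' ∧ editCost M M' ≤ k) :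
    ((types M).filter (fun τ => ¬ fairSet γ (cluster M τ))).card ≤ 2 * k := by
  obtain ⟨M', hM', hcost⟩ := h
  calc _ ≤ (Finset.univ.filter fun τ => cluster M τ ≠ cluster M' τ).card :=
        Finset.card_le_card (filter_not_fairSet_subset_filter_cluster_ne hM')
    _ ≤ 2 * (Finset.univ.filter fun i => M i ≠ M' i).card := card_filter_cluster_ne_le M M'
    _ ≤ 2 * k := by linarith [card_filter_row_ne_le_editCost M M']

/-- If `M` can be made fair with at most `k` edits, then `M` has
at most `2k` unfair types. -/
theorem card_unfair_types_le (hm : 0 < m) (hn : 0 < n)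
    (γ : Fin m → Fin c) (hγ : Function.Surjective γ)
    (M : Fin m → Fin n → A) (k : ℕ)
    (h : ∃ M' : Fin m → Fin n → A, fairMatrix γ M' ∧ editCost M M' ≤ k) :
    ((types M).filter (fun τ => ¬ fairSet γ (cluster M τ))).card ≤ 2 * k :=
  card_unfair_types_le_general γ M k h
end

section
/- Let M' be an m×n matrix over Σ that is fair w.r.t. γ, let τ be a type of M' that is not a type of M, and suppose there is a type σ ≠ τ such that every row i with M'[i,⋆] = τ satisfies M[i,⋆] = σ. Define M'' from M' by setting M''[i,⋆] = σ for every row i with M'[i,⋆] = τ and leaving all other rows of M' unchanged. Then M'' is fair w.r.t. γ, dr(M'') ≤ dr(M'), and d(M,M'') < d(M,M'). (Hence a new-type cluster formed from rows of a single type of M can always be reverted at a strict saving in edits.) -/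
variable {m n c : ℕ} {A : Type*} [Fintype A] [DecidableEq A]

/-- A new-type cluster formed from rows of a single type of `M`
can be reverted at a strict saving in edits, preserving fairness. -/
theorem revert_new_type (hm : 0 < m) (hn : 0 < n)
    (γ : Fin m → Fin c) (hγ : Function.Surjective γ)
    (M M' : Fin m → Fin n → A) (hfair : fairMatrix γ M')
    (τ σ : Fin n → A) (hτ : τ ∈ types M') (hτM : τ ∉ types M) (hστ : σ ≠ τ)
    (hσ : ∀ i, M' i = τ → M i = σ)
    (M'' : Fin m → Fin n → A)
    (hM'' : M'' = fun i => if M' i = τ then σ else M' i) :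
    fairMatrix γ M'' ∧ dr M'' ≤ dr M' ∧ editCost M M'' < editCost M M' := by
  subst hM''
  refine ⟨?_, ?_, ?_⟩
  · -- fairness
    intro ρ hρ
    by_cases hρσ : ρ = σ
    · rw [hρσ]
      have hcl : cluster (fun i => if M' i = τ then σ else M' i) σ
          = cluster M' σ ∪ cluster M' τ := by
        ext i
        simp only [cluster, Finset.mem_filter, Finset.mem_union, Finset.mem_univ, true_and]
        by_cases h : M' i = τ <;> simp [h]
      have hρfair : fairSet γ (cluster M' σ) := by
        by_cases hρt : σ ∈ types M'
        · exact hfair σ hρt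
        · have he : cluster M' σ = ∅ := by
            rw [Finset.eq_empty_iff_forall_notMem]
            intro i hi
            simp only [cluster, Finset.mem_filter] at hi
            exact hρt (Finset.mem_image.mpr ⟨i, Finset.mem_univ i, hi.2⟩)
          intro z; simp [he]
      have hτfair := hfair τ hτ
      have hdisj : Disjoint (cluster M' σ) (cluster M' τ) := by
        rw [Finset.disjoint_left]
        intro i hi1 hi2
        simp only [cluster, Finset.mem_filter] at hi1 hi2
        exact hστ (hi1.2.symm.trans hi2.2)
      intro z
      rw [hcl, Finset.filter_union,
        Finset.card_union_of_disjoint (Finset.disjoint_filter_filter hdisj),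
        Finset.card_union_of_disjoint hdisj, Nat.mul_add, Nat.mul_add,
        hρfair z, hτfair z]
    · obtain ⟨i, -, hi⟩ := Finset.mem_image.mp hρ
      by_cases h : M' i = τ
      · simp only [if_pos h] at hi
        exact absurd hi.symm hρσ
      · simp only [if_neg h] at hi
        have hρτ : ρ ≠ τ := fun he => h (hi.trans he)
        have hcl : cluster (fun i => if M' i = τ then σ else M' i) ρ = cluster M' ρ := by
          ext j
          simp only [cluster, Finset.mem_filter, Finset.mem_univ, true_and]
          by_cases hj : M' j = τ
          · rw [if_pos hj, hj]
            exact ⟨fun hh => absurd hh.symm hρσ, fun hh => absurd hh.symm hρτ⟩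
          · rw [if_neg hj]
        rw [hcl]
        exact hfair ρ (Finset.mem_image.mpr ⟨i, Finset.mem_univ i, hi⟩)
  · -- dr
    have hsub : types (fun i => if M' i = τ then σ else M' i)
        ⊆ insert σ ((types M').erase τ) := by
      intro ρ hρ
      obtain ⟨i, -, hi⟩ := Finset.mem_image.mp hρ
      by_cases h : M' i = τ
      · simp only [if_pos h] at hi
        exact hi ▸ Finset.mem_insert_self _ _
      · simp only [if_neg h] at hi
        exact Finset.mem_insert_of_mem (Finset.mem_erase.mpr
          ⟨fun he => h (hi.trans he), Finset.mem_image.mpr ⟨i, Finset.mem_univ i, hi⟩⟩)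
    have hpos : 0 < (types M').card := Finset.card_pos.mpr ⟨τ, hτ⟩
    calc dr (fun i => if M' i = τ then σ else M' i)
        ≤ (insert σ ((types M').erase τ)).card := Finset.card_le_card hsub
      _ ≤ ((types M').erase τ).card + 1 := Finset.card_insert_le _ _
      _ = (types M').card := by rw [Finset.card_erase_of_mem hτ]; omega
  · -- editCost
    apply Finset.card_lt_card
    have hsub : (Finset.univ.filter
          (fun p : Fin m × Fin n => M p.1 p.2 ≠ (if M' p.1 = τ then σ else M' p.1) p.2))
        ⊆ Finset.univ.filter (fun p : Fin m × Fin n => M p.1 p.2 ≠ M' p.1 p.2) := by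
      intro p hp
      simp only [Finset.mem_filter, Finset.mem_univ, true_and] at hp ⊢
      by_cases h : M' p.1 = τ
      · rw [if_pos h] at hp
        exact absurd (congrFun (hσ p.1 h) p.2) hp
      · rwa [if_neg h] at hp
    rw [Finset.ssubset_iff_of_subset hsub]
    obtain ⟨i, -, hi⟩ := Finset.mem_image.mp hτ
    obtain ⟨j, hj⟩ := Function.ne_iff.mp hστ
    refine ⟨(i, j), ?_, ?_⟩
    · simp only [Finset.mem_filter, Finset.mem_univ, true_and]
      rw [hi, congrFun (hσ i hi) j]
      exact hj
    · simp only [Finset.mem_filter, Finset.mem_univ, true_and, not_not]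
      rw [if_pos hi, congrFun (hσ i hi) j]
end
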